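/- For t > 1, the family of equilibrium states (μ_{t f_k})_{k∈ℕ} on the compact subshifts Σ_k is tight in the space of Borel probability measures on Σ. -/

import Mathlib

/-!
The Gibbs lower bound at a point `x₀` lying in every `Σ_k`, together with `μ_k[x₀ 0] ≤ 1`,
bounds `-P_G(t f_k)` uniformly in `k`. Since `t f ≤ f`, the Gibbs upper bound then gives
`μ_k[i] ≤ C exp(sup f|_[i])` with `C` independent of `k`, a summable majorant. By shift
invariance the same bound holds for `μ_k{x : x n = i}` for every `n`, so choosing thresholds
`N n` with `∑ₙ μ_k{x : x n ≥ N n}` uniformly small makes `Σ ∩ ∏ₙ {0, …, N n - 1}` the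
compact set.
-/

open MeasureTheory Filter

/-- The shift map on one-sided sequences. -/
def shift : (ℕ → ℕ) → (ℕ → ℕ) := fun x n => x (n + 1)

/-- The countable Markov shift determined by the transition matrix `M`. -/
def mshift (M : ℕ → ℕ → Prop) : Set (ℕ → ℕ) := {x | ∀ n, M (x n) (x (n + 1))}

/-- The 1-cylinder `[i] = {x ∈ Σ : x₀ = i}`. -/
def cyl (M : ℕ → ℕ → Prop) (i : ℕ) : Set (ℕ → ℕ) := {x ∈ mshift M | x 0 = i}

/-- `sup f|_[i]`. -/
noncomputable def supCyl (M : ℕ → ℕ → Prop) (f : (ℕ → ℕ) → ℝ) (i : ℕ) : ℝ :=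
  sSup (f '' cyl M i)

open scoped ENNReal

theorem isClosed_mshift (M : ℕ → ℕ → Prop) : IsClosed (mshift M) := by
  have hpair : ∀ n, Continuous fun x : ℕ → ℕ => (x n, x (n + 1)) := fun n =>
    (continuous_apply n).prodMk (continuous_apply (n + 1))
  rw [mshift, Set.ofPred_forall]
  exact isClosed_iInter fun n => (isClosed_discrete {p : ℕ × ℕ | M p.1 p.2}).preimage (hpair n)

theorem shift_iterate_apply (n : ℕ) (x : ℕ → ℕ) (m : ℕ) : shift^[n] x m = x (m + n) := by
  induction n generalizing x with
  | zero => rfl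
  | succ n ih => rw [Function.iterate_succ_apply, ih]; rfl

theorem measure_coord_preimage_eq {μ : Measure (ℕ → ℕ)} (hμ : MeasurePreserving shift μ μ)
    (n : ℕ) (s : Set ℕ) : μ {x | x n ∈ s} = μ {x | x 0 ∈ s} := by
  have hpre : {x : ℕ → ℕ | x n ∈ s} = shift^[n] ⁻¹' {x | x 0 ∈ s} := by
    ext x
    simp only [Set.mem_ofPred_eq, Set.mem_preimage, shift_iterate_apply, zero_add]
  rw [hpre]
  exact (hμ.iterate n).measure_preimage
    ((measurable_pi_apply 0) MeasurableSet.of_discrete).nullMeasurableSet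

theorem measure_le_coord_zero_le_tsum {μ : Measure (ℕ → ℕ)} {b : ℕ → ℝ≥0∞}
    (hb : ∀ i, μ {x | x 0 = i} ≤ b i) (N : ℕ) :
    μ {x | N ≤ x 0} ≤ ∑' j, b (j + N) := by
  have hU : {x : ℕ → ℕ | N ≤ x 0} = ⋃ j, {x | x 0 = j + N} := by
    ext x
    simp only [Set.mem_ofPred_eq, Set.mem_iUnion]
    exact ⟨fun h => ⟨x 0 - N, by omega⟩, fun ⟨j, hj⟩ => by omega⟩
  calc μ {x | N ≤ x 0} ≤ ∑' j, μ {x | x 0 = j + N} := hU ▸ measure_iUnion_le _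
    _ ≤ ∑' j, b (j + N) := ENNReal.tsum_le_tsum fun j => hb (j + N)

theorem tight_of_cylinder_le_of_measurePreserving {ι : Type*} {X : Set (ℕ → ℕ)}
    (hX : IsClosed X) {μ : ι → Measure (ℕ → ℕ)} (hsupp : ∀ k, μ k Xᶜ = 0)
    (hinv : ∀ k, MeasurePreserving shift (μ k) (μ k)) {b : ℕ → ℝ≥0∞} (hb : ∑' i, b i ≠ ∞)
    (hbound : ∀ k i, μ k {x | x 0 = i} ≤ b i) (ε : ℝ≥0∞) (hε : 0 < ε) :
    ∃ K ⊆ X, IsCompact K ∧ ∀ k, μ k Kᶜ < ε := by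
  obtain ⟨δ, hδpos, hδsum⟩ := ENNReal.exists_pos_sum_of_countable hε.ne' ℕ
  have htail : ∀ n, ∃ N, ∑' j, b (j + N) ≤ δ n := fun n =>
    ((ENNReal.tendsto_atTop_zero.1 (ENNReal.tendsto_sum_nat_add b hb)) _
      (ENNReal.coe_pos.2 (hδpos n))).imp fun N hN => hN N le_rfl
  choose N hN using htail
  set Q : Set (ℕ → ℕ) := Set.univ.pi fun n => Set.Iio (N n)
  refine ⟨X ∩ Q, Set.inter_subset_left,
    (isCompact_univ_pi fun n => (Set.finite_Iio _).isCompact).inter_left hX, fun k => ?_⟩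
  have hcompl : (X ∩ Q)ᶜ ⊆ Xᶜ ∪ ⋃ n, {x | N n ≤ x n} := by
    intro x hx
    by_cases hxX : x ∈ X
    · have hxQ : x ∉ Q := fun hxQ => hx ⟨hxX, hxQ⟩
      simp only [Q, Set.mem_univ_pi, Set.mem_Iio, not_forall, not_lt] at hxQ
      exact Or.inr (Set.mem_iUnion.2 hxQ)
    · exact Or.inl hxX
  calc μ k (X ∩ Q)ᶜ ≤ μ k Xᶜ + μ k (⋃ n, {x | N n ≤ x n}) :=
        (measure_mono hcompl).trans (measure_union_le _ _)
    _ ≤ ∑' n, μ k {x | N n ≤ x n} := by rw [hsupp k, zero_add]; exact measure_iUnion_le _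
    _ = ∑' n, μ k {x | N n ≤ x 0} := tsum_congr fun n =>
        measure_coord_preimage_eq (hinv k) n (Set.Ici (N n))
    _ ≤ ∑' n, (δ n : ℝ≥0∞) := ENNReal.tsum_le_tsum fun n =>
        (measure_le_coord_zero_le_tsum (hbound k) (N n)).trans (hN n)
    _ < ε := hδsum

theorem nonpos_of_ofReal_exp_le_measure {α : Type*} [MeasurableSpace α] {μ : Measure α}
    [IsProbabilityMeasure μ] {s : Set α} {r : ℝ} (h : ENNReal.ofReal (Real.exp r) ≤ μ s) :
    r ≤ 0 := by
  have h1 : ENNReal.ofReal (Real.exp r) ≤ 1 := h.trans prob_le_one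
  rwa [ENNReal.ofReal_le_one, Real.exp_le_one_iff] at h1

theorem measure_coord_zero_eq_zero_of_inter_cyl_eq_empty {M : ℕ → ℕ → Prop}
    {S : Set (ℕ → ℕ)} {μ : Measure (ℕ → ℕ)} (hSsub : S ⊆ mshift M) (hsupp : μ Sᶜ = 0)
    {i : ℕ} (hempty : S ∩ cyl M i = ∅) : μ {y | y 0 = i} = 0 := by
  have hS : {y : ℕ → ℕ | y 0 = i} ∩ S = S ∩ cyl M i := by
    ext y
    exact ⟨fun ⟨hy, hyS⟩ => ⟨hyS, hSsub hyS, hy⟩, fun ⟨hyS, _, hy⟩ => ⟨hy, hyS⟩⟩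
  rw [← measure_inter_conull hsupp, hS, hempty, measure_empty]

theorem measure_coord_zero_le_of_gibbs {M : ℕ → ℕ → Prop} {f : (ℕ → ℕ) → ℝ} {t V p C : ℝ}
    (ht : 1 ≤ t) (hle : ∀ x ∈ mshift M, f x ≤ 0) {S : Set (ℕ → ℕ)} (hSsub : S ⊆ mshift M)
    {μ : Measure (ℕ → ℕ)} (hsupp : μ Sᶜ = 0) (hp : -p ≤ C) (i : ℕ)
    (hGibbs : ∀ x ∈ S ∩ cyl M i,
      μ {y | y 0 = i} ≤ ENNReal.ofReal (Real.exp (4 * t * V) * Real.exp (t * f x - p))) :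
    μ {y | y 0 = i} ≤ ENNReal.ofReal (Real.exp (4 * t * V + C) * Real.exp (supCyl M f i)) := by
  rcases Set.eq_empty_or_nonempty (S ∩ cyl M i) with hempty | ⟨x, hxS, hxi⟩
  · rw [measure_coord_zero_eq_zero_of_inter_cyl_eq_empty hSsub hsupp hempty]
    exact zero_le
  refine (hGibbs x ⟨hxS, hxi⟩).trans (ENNReal.ofReal_le_ofReal ?_)
  have hbdd : BddAbove (f '' cyl M i) := ⟨0, Set.forall_mem_image.2 fun y hy => hle y hy.1⟩
  have hsup : f x ≤ supCyl M f i := le_csSup hbdd ⟨x, hxi, rfl⟩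
  have htf : t * f x ≤ f x := by nlinarith [hle x (hSsub hxS)]
  rw [← Real.exp_add, ← Real.exp_add, Real.exp_le_exp]
  linarith

/-- Here the equilibrium state `μ_k` of `t f_k` on `Σ_k` is encoded through its Gibbs property
on 1-cylinders; `V` bounds the total variation `V(f)` and `P_k = P_G(t f_k)`. -/
theorem equilibrium_states_tight_general (M : ℕ → ℕ → Prop) (f : (ℕ → ℕ) → ℝ)
    (t V : ℝ) (ht : 1 < t)
    (hle : ∀ x ∈ mshift M, f x ≤ 0)
    (hsum : Summable fun i => Real.exp (supCyl M f i))
    (S : ℕ → Set (ℕ → ℕ))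
    (hSsub : ∀ k, S k ⊆ mshift M) (hSinc : ∀ k, S k ⊆ S (k + 1))
    (hSne : (S 0).Nonempty)
    (μ : ℕ → Measure (ℕ → ℕ)) (hprob : ∀ k, IsProbabilityMeasure (μ k))
    (hsupp : ∀ k, μ k (S k)ᶜ = 0)
    (hinv : ∀ k, MeasurePreserving shift (μ k) (μ k))
    (P : ℕ → ℝ)
    (hGibbs : ∀ k i, ∀ x ∈ S k ∩ cyl M i,
      ENNReal.ofReal (Real.exp (-(4 * t * V)) * Real.exp (t * f x - P k)) ≤ μ k {y | y 0 = i} ∧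
      μ k {y | y 0 = i} ≤ ENNReal.ofReal (Real.exp (4 * t * V) * Real.exp (t * f x - P k))) :
    ∀ ε : ENNReal, 0 < ε →
      ∃ K ⊆ mshift M, IsCompact K ∧ ∀ k, μ k Kᶜ < ε := by
  obtain ⟨x₀, hx₀⟩ := hSne
  have hx₀S : ∀ k, x₀ ∈ S k := fun k => monotone_nat_of_le_succ hSinc (Nat.zero_le k) hx₀
  set C := 4 * t * V - t * f x₀
  have hP : ∀ k, -P k ≤ C := fun k => by
    have := hprob k
    have hlow := (hGibbs k (x₀ 0) x₀ ⟨hx₀S k, hSsub 0 hx₀, rfl⟩).1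
    rw [← Real.exp_add] at hlow
    linarith [nonpos_of_ofReal_exp_le_measure hlow]
  have hB : ∑' i, ENNReal.ofReal (Real.exp (4 * t * V + C) * Real.exp (supCyl M f i)) ≠ ∞ := by
    rw [← ENNReal.ofReal_tsum_of_nonneg (fun i => by positivity) (hsum.mul_left _)]
    exact ENNReal.ofReal_ne_top
  exact tight_of_cylinder_le_of_measurePreserving (isClosed_mshift M)
    (fun k => measure_mono_null (Set.compl_subset_compl.2 (hSsub k)) (hsupp k)) hinv hB
    fun k i => measure_coord_zero_le_of_gibbs ht.le hle (hSsub k) (hsupp k) (hP k) i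
      fun x hx => (hGibbs k i x hx).2

/-- For `t > 1`, the family of equilibrium states `(μ_{t f_k})_k` on an
increasing exhausting sequence of compact subshifts `Σ_k` of `Σ` is tight.  Here the
equilibrium state `μ_k` of `t f_k` on `Σ_k` is encoded through its defining Gibbs property
on 1-cylinders:
`exp(-4 V(tf)) ≤ μ_k[i] / exp(t f(x) − P_k) ≤ exp(4 V(tf))` for every `x ∈ Σ_k ∩ [i]`,
where `V` bounds the total variation `V(f)` and `P_k = P_G(t f_k)`. -/
theorem equilibrium_states_tight (M : ℕ → ℕ → Prop) (f : (ℕ → ℕ) → ℝ)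
    (t V : ℝ) (ht : 1 < t) (hV : 0 ≤ V)
    (hle : ∀ x ∈ mshift M, f x ≤ 0)
    (hsum : Summable fun i => Real.exp (supCyl M f i))
    (S : ℕ → Set (ℕ → ℕ))
    (hSsub : ∀ k, S k ⊆ mshift M) (hSinc : ∀ k, S k ⊆ S (k + 1))
    (hScomp : ∀ k, IsCompact (S k)) (hSclosed : ∀ k, IsClosed (S k))
    (hSinv : ∀ k, shift '' S k ⊆ S k) (hSne : (S 0).Nonempty)
    (μ : ℕ → Measure (ℕ → ℕ)) (hprob : ∀ k, IsProbabilityMeasure (μ k))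
    (hsupp : ∀ k, μ k (S k)ᶜ = 0)
    (hinv : ∀ k, MeasurePreserving shift (μ k) (μ k))
    (P : ℕ → ℝ)
    (hGibbs : ∀ k i, ∀ x ∈ S k ∩ cyl M i,
      ENNReal.ofReal (Real.exp (-(4 * t * V)) * Real.exp (t * f x - P k)) ≤ μ k {y | y 0 = i} ∧
      μ k {y | y 0 = i} ≤ ENNReal.ofReal (Real.exp (4 * t * V) * Real.exp (t * f x - P k))) :
    ∀ ε : ENNReal, 0 < ε →
      ∃ K ⊆ mshift M, IsCompact K ∧ ∀ k, μ k Kᶜ < ε :=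
  equilibrium_states_tight_general M f t V ht hle hsum S hSsub hSinc hSne μ hprob hsupp hinv P
    hGibbs
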